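/- Let S be any feasible capacity installation for the constructed two-color f-SAND instance of cost at most (M+2)·m + 8p, where M > 2m + 8p. Then the support of S contains exactly m edges of cost M, each with exactly one unit of capacity installed; consequently, in any routing associated with S, for each j ∈ [m] the path P_1^j used by k_j as a C_1-terminal and the path P_2^j used by k_j as a C_2-terminal share their first edge (which is the unique cost-M edge incident to k_j in the support). -/

import Mathlib

open scoped Classical
open Finset

namespace FSand

variable {V : Type} [Fintype V] [DecidableEq V]

/-- An edge crosses the cut `(S, Sᶜ)`. -/
def Crossing (S : Finset V) (e : Sym2 V) : Prop :=
  ∃ u v, e = s(u, v) ∧ u ∈ S ∧ v ∉ S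

/-- Total capacity installed on edges crossing the cut `(S, Sᶜ)`. -/
noncomputable def cutCap (x : Sym2 V → ℕ) (S : Finset V) : ℕ :=
  ∑ e ∈ Finset.univ.filter (Crossing S), x e

/-- Feasibility of a capacity installation for the f-SAND instance `(G, r, C)`. -/
def Feasible {ι : Type} (G : SimpleGraph V) (r : V) (C : ι → Finset V)
    (x : Sym2 V → ℕ) : Prop :=
  (∀ e, e ∉ G.edgeSet → x e = 0) ∧
  ∀ S : Finset V, r ∉ S → ∀ i : ι, (C i ∩ S).card ≤ cutCap x S

/-- Cost of a capacity installation. -/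
noncomputable def instCost (w : Sym2 V → ℝ) (x : Sym2 V → ℕ) : ℝ :=
  ∑ e : Sym2 V, w e * (x e : ℝ)

end FSand

namespace SandSat

/-- Vertices of the reduction graph: the root, one node `k_j` per clause, and seven
nodes `y_i^1, …, y_i^7` per variable (indexed here by `Fin 7`, so `y_i^ℓ` has index
`ℓ - 1`). -/
abbrev SandV (m p : ℕ) := Option (Fin m ⊕ (Fin p × Fin 7))

variable {m p : ℕ}

/-- The root. -/
def rt : SandV m p := none
/-- The clause node `k_j`. -/
def kv (j : Fin m) : SandV m p := some (Sum.inl j)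
/-- The variable node `y_i^{ℓ+1}`. -/
def yv (i : Fin p) (ℓ : Fin 7) : SandV m p := some (Sum.inr (i, ℓ))

/-- The SAT formula, given by the clause indices `i1 i, i2 i` of the two positive
occurrences and `i3 i` of the negated occurrence of each variable `x_i`, is
satisfiable. -/
def Satisfiable (i1 i2 i3 : Fin p → Fin m) : Prop :=
  ∃ a : Fin p → Bool, ∀ j : Fin m,
    (∃ i, (i1 i = j ∨ i2 i = j) ∧ a i = true) ∨ (∃ i, i3 i = j ∧ a i = false)

/-- The edges `{r, y_i^1}, {r, y_i^3}, {r, y_i^5}, {r, y_i^7}` (cost 2). -/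
def RootEdge (e : Sym2 (SandV m p)) : Prop :=
  ∃ i, e = s(rt, yv i 0) ∨ e = s(rt, yv i 2) ∨ e = s(rt, yv i 4) ∨ e = s(rt, yv i 6)

/-- The edges `{y_i^ℓ, y_i^{ℓ+1}}`, `ℓ = 1, …, 6` (cost 1). -/
def PathEdge (e : Sym2 (SandV m p)) : Prop :=
  ∃ i, e = s(yv i 0, yv i 1) ∨ e = s(yv i 1, yv i 2) ∨ e = s(yv i 2, yv i 3) ∨
    e = s(yv i 3, yv i 4) ∨ e = s(yv i 4, yv i 5) ∨ e = s(yv i 5, yv i 6)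

/-- The edges `{y_i^2, k_{i_1}}, {y_i^4, k_{i_3}}, {y_i^6, k_{i_2}}` (cost `M`). -/
def CrossEdge (i1 i2 i3 : Fin p → Fin m) (e : Sym2 (SandV m p)) : Prop :=
  ∃ i, e = s(yv i 1, kv (i1 i)) ∨ e = s(yv i 3, kv (i3 i)) ∨ e = s(yv i 5, kv (i2 i))

/-- The reduction graph. -/
def sandG (i1 i2 i3 : Fin p → Fin m) : SimpleGraph (SandV m p) :=
  SimpleGraph.fromEdgeSet
    {e | RootEdge e ∨ PathEdge e ∨ CrossEdge i1 i2 i3 e}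

/-- The edge costs of the reduction graph. -/
noncomputable def sandW (M : ℝ) (i1 i2 i3 : Fin p → Fin m) :
    Sym2 (SandV m p) → ℝ := fun e =>
  if RootEdge e then 2
  else if PathEdge e then 1
  else if CrossEdge i1 i2 i3 e then M
  else 0

/-- The two colors: `C_1` consists of all clause nodes together with the `y_i^1, y_i^5`,
and `C_2` of all clause nodes together with the `y_i^3, y_i^7`. -/
def sandC (q : Fin 2) : Finset (SandV m p) :=
  (Finset.univ.image kv) ∪
    (if q = 0 then
      Finset.univ.image (fun i => yv i 0) ∪ Finset.univ.image (fun i => yv i 4)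
    else
      Finset.univ.image (fun i => yv i 2) ∪ Finset.univ.image (fun i => yv i 6))

/-- Finset of cost-`M` edges. -/
noncomputable def crossE (i1 i2 i3 : Fin p → Fin m) : Finset (Sym2 (SandV m p)) :=
  Finset.univ.filter (CrossEdge i1 i2 i3)

end SandSat

namespace FSand

/-- A routing associated with a capacity installation `x` of a two-color instance:
for each color `q` and each terminal `v` of color `q`, a path from `v` to the root, such
that every edge lies on at most `x e` paths of each color. -/
structure AssocRouting {V : Type} [Fintype V] [DecidableEq V]
    (G : SimpleGraph V) (r : V) (C : Fin 2 → Finset V) (x : Sym2 V → ℕ) where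
  P : (q : Fin 2) → (v : V) → v ∈ C q → G.Walk v r
  isPath : ∀ q v hv, (P q v hv).IsPath
  cap : ∀ q e, ((C q).attach.filter (fun v => e ∈ (P q v.1 v.2).edges)).card ≤ x e

end FSand

/-! The singleton cut `{k_j}` forces one unit of capacity on the edges at `k_j`, and the only
edges at `k_j` are cost-`M` edges. Every cost-`M` edge has exactly one clause endpoint, so the
cost-`M` capacity is at least `m`; since `(M + 2)·m + 8p < M·(m + 1)` it is exactly `m`, one unit
per clause node. Both paths leaving `k_j` use capacity on their first edge, so they both leave
through the unique cost-`M` edge at `k_j` that carries capacity. -/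

namespace Finset

lemma card_filter_ne_zero_of_sum_eq_one {ι : Type*} {s : Finset ι} {f : ι → ℕ}
    (h : ∑ i ∈ s, f i = 1) : (s.filter (f · ≠ 0)).card = 1 := by
  have hle : (s.filter (f · ≠ 0)).card ≤ 1 := by
    have := card_nsmul_le_sum (s.filter (f · ≠ 0)) f 1 fun i hi =>
      Nat.one_le_iff_ne_zero.2 (mem_filter.1 hi).2
    rwa [smul_eq_mul, mul_one, sum_filter_ne_zero, h] at this
  have hpos : (s.filter (f · ≠ 0)).Nonempty := by
    obtain ⟨i, hi, hfi⟩ := exists_ne_zero_of_sum_ne_zero (h ▸ one_ne_zero)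
    exact ⟨i, mem_filter.2 ⟨hi, hfi⟩⟩
  have := hpos.card_pos
  omega

end Finset

namespace SimpleGraph.Walk

lemma head?_edges_eq_mk_start_snd {V : Type*} {G : SimpleGraph V} {v w : V} {p : G.Walk v w}
    (hp : ¬p.Nil) : p.edges.head? = some s(v, p.snd) := by
  rw [List.head?_eq_some_head (edges_eq_nil.not.2 hp), head_edges_eq_mk_start_snd]

end SimpleGraph.Walk

namespace FSand

variable {V : Type} [Fintype V]

lemma mul_sum_le_instCost {w : Sym2 V → ℝ} {x : Sym2 V → ℕ} {s : Finset (Sym2 V)} {c : ℝ}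
    (hw : ∀ e, 0 ≤ w e) (hs : ∀ e ∈ s, w e = c) :
    c * ∑ e ∈ s, (x e : ℝ) ≤ instCost w x := by
  rw [mul_sum, instCost]
  calc ∑ e ∈ s, c * (x e : ℝ)
      = ∑ e ∈ s, w e * x e := sum_congr rfl fun e he => by rw [hs e he]
    _ ≤ ∑ e, w e * x e := sum_le_sum_of_subset_of_nonneg (subset_univ s) fun e _ _ =>
      mul_nonneg (hw e) (Nat.cast_nonneg _)

variable [DecidableEq V]

lemma cutCap_singleton_le (x : Sym2 V → ℕ) (v : V) :
    cutCap x {v} ≤ ∑ e ∈ univ.filter (v ∈ ·), x e := by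
  refine sum_le_sum_of_subset fun e he => mem_filter.2 ⟨mem_univ e, ?_⟩
  obtain ⟨u, w, rfl, hu, -⟩ := (mem_filter.1 he).2
  exact (mem_singleton.1 hu) ▸ Sym2.mem_mk_left u w

lemma Feasible.one_le_sum_incident {ι : Type} {G : SimpleGraph V} {r : V} {C : ι → Finset V}
    {x : Sym2 V → ℕ} (h : Feasible G r C x) {i : ι} {v : V} (hv : v ∈ C i) (hvr : v ≠ r) :
    1 ≤ ∑ e ∈ univ.filter (v ∈ ·), x e := by
  have hcut := h.2 {v} (by simpa [eq_comm] using hvr) i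
  rw [inter_singleton_of_mem hv, card_singleton] at hcut
  exact hcut.trans (cutCap_singleton_le x v)

lemma AssocRouting.one_le_of_mem_edges {G : SimpleGraph V} {r : V} {C : Fin 2 → Finset V}
    {x : Sym2 V → ℕ} (R : AssocRouting G r C x) {q : Fin 2} {v : V} (hv : v ∈ C q)
    {e : Sym2 V} (he : e ∈ (R.P q v hv).edges) : 1 ≤ x e :=
  (card_pos.2 ⟨⟨v, hv⟩, mem_filter.2 ⟨mem_attach _ _, he⟩⟩).trans_le (R.cap q e)

end FSand

namespace SandSat

open FSand

variable {m p : ℕ} {i1 i2 i3 : Fin p → Fin m}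

noncomputable def clauseEdges (i1 i2 i3 : Fin p → Fin m) (j : Fin m) :
    Finset (Sym2 (SandV m p)) :=
  (crossE i1 i2 i3).filter (kv j ∈ ·)

lemma not_rootEdge_of_kv_mem {e : Sym2 (SandV m p)} {j : Fin m} (hj : kv j ∈ e) :
    ¬RootEdge e := by
  rintro ⟨i, h | h | h | h⟩ <;> subst h <;> simp [Sym2.mem_iff, kv, rt, yv] at hj

lemma not_pathEdge_of_kv_mem {e : Sym2 (SandV m p)} {j : Fin m} (hj : kv j ∈ e) :
    ¬PathEdge e := by
  rintro ⟨i, h | h | h | h | h | h⟩ <;> subst h <;> simp [Sym2.mem_iff, kv, yv] at hj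

lemma crossEdge_of_kv_mem {e : Sym2 (SandV m p)} {j : Fin m} (hj : kv j ∈ e)
    (he : e ∈ (sandG i1 i2 i3).edgeSet) : CrossEdge i1 i2 i3 e := by
  rw [sandG, SimpleGraph.edgeSet_fromEdgeSet] at he
  obtain ⟨hroot | hpath | hcross, -⟩ := he
  · exact absurd hroot (not_rootEdge_of_kv_mem hj)
  · exact absurd hpath (not_pathEdge_of_kv_mem hj)
  · exact hcross

lemma CrossEdge.exists_kv_mem {e : Sym2 (SandV m p)} (h : CrossEdge i1 i2 i3 e) :
    ∃ j, kv j ∈ e := by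
  obtain ⟨i, h | h | h⟩ := h <;> subst h <;> exact ⟨_, Sym2.mem_mk_right _ _⟩

lemma CrossEdge.eq_of_kv_mem {e : Sym2 (SandV m p)} (h : CrossEdge i1 i2 i3 e)
    {j j' : Fin m} (hj : kv j ∈ e) (hj' : kv j' ∈ e) : j = j' := by
  obtain ⟨i, h | h | h⟩ := h <;> subst h <;> simp [Sym2.mem_iff, kv, yv] at hj hj' <;>
    rw [hj, hj']

lemma sandW_of_crossEdge {M : ℝ} {e : Sym2 (SandV m p)} (h : CrossEdge i1 i2 i3 e) :
    sandW M i1 i2 i3 e = M := by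
  obtain ⟨j, hj⟩ := h.exists_kv_mem
  rw [sandW, if_neg (not_rootEdge_of_kv_mem hj), if_neg (not_pathEdge_of_kv_mem hj), if_pos h]

lemma sandW_nonneg {M : ℝ} (hM : 0 ≤ M) (e : Sym2 (SandV m p)) : 0 ≤ sandW M i1 i2 i3 e := by
  unfold sandW
  split_ifs <;> norm_num [hM]

lemma crossE_eq_biUnion_clauseEdges :
    crossE i1 i2 i3 =
      univ.biUnion (clauseEdges i1 i2 i3 : Fin m → Finset (Sym2 (SandV m p))) := by
  ext e
  simp only [mem_biUnion, mem_univ, true_and, clauseEdges, mem_filter]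
  exact ⟨fun he => ((mem_filter.1 he).2.exists_kv_mem).imp fun _ hj => ⟨he, hj⟩,
    fun ⟨_, he, _⟩ => he⟩

lemma pairwiseDisjoint_clauseEdges :
    ((univ : Finset (Fin m)) : Set (Fin m)).PairwiseDisjoint
      (clauseEdges i1 i2 i3 : Fin m → Finset (Sym2 (SandV m p))) := by
  intro j _ j' _ hjj'
  refine disjoint_left.2 fun e he he' => hjj' ?_
  simp only [clauseEdges, crossE, mem_filter, mem_univ, true_and] at he he'
  exact he.1.eq_of_kv_mem he.2 he'.2

lemma one_le_sum_clauseEdges {x : Sym2 (SandV m p) → ℕ}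
    (hfeas : Feasible (sandG i1 i2 i3) rt sandC x) (j : Fin m) :
    1 ≤ ∑ e ∈ clauseEdges i1 i2 i3 j, x e := by
  have hkj : kv j ∈ (sandC 0 : Finset (SandV m p)) :=
    mem_union_left _ (mem_image_of_mem kv (mem_univ j))
  refine (hfeas.one_le_sum_incident hkj (by simp [kv, rt])).trans
    (sum_le_sum_of_ne_zero fun e he hxe => ?_)
  have hj : kv j ∈ e := (mem_filter.1 he).2
  have hG : e ∈ (sandG i1 i2 i3).edgeSet := by_contra fun hG => hxe (hfeas.1 e hG)
  exact mem_filter.2 ⟨mem_filter.2 ⟨mem_univ e, crossEdge_of_kv_mem hj hG⟩, hj⟩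

lemma sum_crossE_le {M : ℝ} (hM : 2 * (m : ℝ) + 8 * p < M) {x : Sym2 (SandV m p) → ℕ}
    (hcost : instCost (sandW M i1 i2 i3) x ≤ (M + 2) * m + 8 * p) :
    ∑ e ∈ crossE i1 i2 i3, x e ≤ m := by
  have hM0 : 0 ≤ M := le_trans (by positivity) hM.le
  have hlow : M * ∑ e ∈ crossE i1 i2 i3, (x e : ℝ) ≤ instCost (sandW M i1 i2 i3) x :=
    mul_sum_le_instCost (sandW_nonneg hM0) fun e he => sandW_of_crossEdge (mem_filter.1 he).2
  by_contra! hgt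
  have hgt' : (m : ℝ) + 1 ≤ ∑ e ∈ crossE i1 i2 i3, (x e : ℝ) := by exact_mod_cast hgt
  nlinarith [mul_le_mul_of_nonneg_left hgt' hM0]

lemma sum_clauseEdges_eq_one {M : ℝ} (hM : 2 * (m : ℝ) + 8 * p < M)
    {x : Sym2 (SandV m p) → ℕ}
    (hfeas : Feasible (sandG i1 i2 i3) rt sandC x)
    (hcost : instCost (sandW M i1 i2 i3) x ≤ (M + 2) * m + 8 * p) (j : Fin m) :
    ∑ e ∈ clauseEdges i1 i2 i3 j, x e = 1 := by
  have hle : ∀ j ∈ univ, 1 ≤ ∑ e ∈ clauseEdges i1 i2 i3 j, x e :=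
    fun j _ => one_le_sum_clauseEdges hfeas j
  have htotal : ∑ j, ∑ e ∈ clauseEdges i1 i2 i3 j, x e ≤ ∑ _j : Fin m, 1 := by
    rw [← sum_biUnion pairwiseDisjoint_clauseEdges, ← crossE_eq_biUnion_clauseEdges]
    simpa using sum_crossE_le hM hcost
  exact ((sum_eq_sum_iff_of_le hle).1 (le_antisymm (sum_le_sum hle) htotal) j (mem_univ j)).symm

lemma exists_head?_edges_mem_clauseEdges {x : Sym2 (SandV m p) → ℕ}
    (R : AssocRouting (sandG i1 i2 i3) rt sandC x) (q : Fin 2) (j : Fin m)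
    (hq : kv j ∈ (sandC q : Finset (SandV m p))) :
    ∃ e ∈ (clauseEdges i1 i2 i3 j).filter (x · ≠ 0),
      (R.P q (kv j) hq).edges.head? = some e := by
  have hnil : ¬(R.P q (kv j) hq).Nil := SimpleGraph.Walk.not_nil_of_ne (by simp [kv, rt])
  have hG : s(kv j, (R.P q (kv j) hq).snd) ∈ (sandG i1 i2 i3).edgeSet :=
    SimpleGraph.Walk.adj_snd hnil
  refine ⟨_, mem_filter.2 ⟨?_, ?_⟩, SimpleGraph.Walk.head?_edges_eq_mk_start_snd hnil⟩
  · have hj : kv j ∈ s(kv j, (R.P q (kv j) hq).snd) := Sym2.mem_mk_left _ _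
    exact mem_filter.2 ⟨mem_filter.2 ⟨mem_univ _, crossEdge_of_kv_mem hj hG⟩, hj⟩
  · exact Nat.one_le_iff_ne_zero.1
      (R.one_le_of_mem_edges hq (SimpleGraph.Walk.mk_start_snd_mem_edges hnil))

end SandSat

open FSand SandSat in
theorem stmt_8_general {m p : ℕ} (i1 i2 i3 : Fin p → Fin m)
    (M : ℝ) (hM : 2 * (m : ℝ) + 8 * p < M)
    (x : Sym2 (SandV m p) → ℕ)
    (hfeas : Feasible (sandG i1 i2 i3) rt sandC x)
    (hcost : instCost (sandW M i1 i2 i3) x ≤ (M + 2) * m + 8 * p) :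
    ((crossE i1 i2 i3).filter (fun e => x e ≠ 0)).card = m ∧
    (∀ e ∈ crossE i1 i2 i3, x e ≤ 1) ∧
    ∀ R : AssocRouting (sandG i1 i2 i3) rt sandC x,
      ∀ (j : Fin m) (h0 : kv j ∈ (sandC 0 : Finset (SandV m p)))
        (h1 : kv j ∈ (sandC 1 : Finset (SandV m p))),
        ∃ e, CrossEdge i1 i2 i3 e ∧ (kv j) ∈ e ∧ x e = 1 ∧
          (R.P 0 (kv j) h0).edges.head? = some e ∧
          (R.P 1 (kv j) h1).edges.head? = some e := by
  have hblock := sum_clauseEdges_eq_one hM hfeas hcost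
  have hsupport j := card_filter_ne_zero_of_sum_eq_one (hblock j)
  have hle_one : ∀ e ∈ crossE i1 i2 i3, x e ≤ 1 := by
    intro e he
    obtain ⟨j, hj⟩ := (mem_filter.1 he).2.exists_kv_mem
    exact hblock j ▸ single_le_sum (fun _ _ => Nat.zero_le _) (mem_filter.2 ⟨he, hj⟩)
  refine ⟨?_, hle_one, fun R j h0 h1 => ?_⟩
  · rw [crossE_eq_biUnion_clauseEdges, filter_biUnion, card_biUnion fun j _ j' _ hjj' =>
      disjoint_filter_filter (pairwiseDisjoint_clauseEdges (mem_univ j) (mem_univ j') hjj')]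
    simp [hsupport]
  obtain ⟨e, he⟩ := card_eq_one.1 (hsupport j)
  obtain ⟨e0, he0, hhead0⟩ := exists_head?_edges_mem_clauseEdges R 0 j h0
  obtain ⟨e1, he1, hhead1⟩ := exists_head?_edges_mem_clauseEdges R 1 j h1
  rw [he, mem_singleton] at he0 he1
  have hmem : e ∈ (clauseEdges i1 i2 i3 j).filter (x · ≠ 0) := he ▸ mem_singleton_self e
  simp only [clauseEdges, crossE, mem_filter, mem_univ, true_and] at hmem
  obtain ⟨⟨hcross, hj⟩, hx⟩ := hmem
  have hxe := hle_one e (mem_filter.2 ⟨mem_univ e, hcross⟩)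
  exact ⟨e, hcross, hj, by omega, he0 ▸ hhead0, he1 ▸ hhead1⟩

open FSand SandSat in
/-- any feasible installation of cost at most `(M+2)·m + 8p` has exactly `m`
cost-`M` edges in its support, each with one unit of capacity, and in any associated
routing the two paths of each clause node `k_j` share their first edge, which is a
cost-`M` edge of the support incident to `k_j`. -/
theorem stmt_8 {m p : ℕ} (i1 i2 i3 : Fin p → Fin m)
    (hocc : ∀ i, i1 i ≠ i2 i ∧ i1 i ≠ i3 i ∧ i2 i ≠ i3 i)
    (M : ℝ) (hM : 2 * (m : ℝ) + 8 * p < M)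
    (x : Sym2 (SandV m p) → ℕ)
    (hfeas : Feasible (sandG i1 i2 i3) rt sandC x)
    (hcost : instCost (sandW M i1 i2 i3) x ≤ (M + 2) * m + 8 * p) :
    ((crossE i1 i2 i3).filter (fun e => x e ≠ 0)).card = m ∧
    (∀ e ∈ crossE i1 i2 i3, x e ≤ 1) ∧
    ∀ R : AssocRouting (sandG i1 i2 i3) rt sandC x,
      ∀ (j : Fin m) (h0 : kv j ∈ (sandC 0 : Finset (SandV m p)))
        (h1 : kv j ∈ (sandC 1 : Finset (SandV m p))),
        ∃ e, CrossEdge i1 i2 i3 e ∧ (kv j) ∈ e ∧ x e = 1 ∧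
          (R.P 0 (kv j) h0).edges.head? = some e ∧
          (R.P 1 (kv j) h1).edges.head? = some e :=
  stmt_8_general i1 i2 i3 M hM x hfeas hcost
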